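/- The bilinear form Q̄(x,y) = p(x·c(y)) on Cl(V,Q) satisfies: (1) Q̄(1,1)=1; (2) left-translation adjoint L(x)* = L(c(x)); (3) right-translation adjoint R(x)* = R(c(x)); (4) Q̄ restricts to Q on V; (5) Q̄(α(x),α(y)) = Q̄(x,y); and (6) Q̄(c(x),c(y)) = Q̄(x,y) for all x, y. -/

import Mathlib

open CliffordAlgebra

section Defs

variable {F V : Type*} [Field F] [AddCommGroup V] [Module F V]

/-- The monomial `e_I` associated to a multi-index `I`, realized as a finite set of
indices multiplied in increasing order (with `e_∅ = 1`). -/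
noncomputable def eI (Qf : QuadraticForm F V) {n : ℕ} (b : Module.Basis (Fin n) F V)
    (s : Finset (Fin n)) : CliffordAlgebra Qf :=
  ((s.sort (· ≤ ·)).map fun i => ι Qf (b i)).prod

/-- The conjugation anti-automorphism `c = α ∘ τ` of the Clifford algebra. -/
noncomputable def cconj (Qf : QuadraticForm F V) :
    CliffordAlgebra Qf →ₗ[F] CliffordAlgebra Qf :=
  involute.toLinearMap ∘ₗ (reverse (Q := Qf))

/-- The canonical bilinear form `Q̄(x,y) = p(x · c(y))`, where `p` is the scalar-component
projection determined by a monomial basis `bas` (indexed by multi-indices, with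
`bas s = e_s`, in particular `bas ∅ = 1`). -/
noncomputable def Qbar {Qf : QuadraticForm F V} {n : ℕ}
    (bas : Module.Basis (Finset (Fin n)) F (CliffordAlgebra Qf))
    (x y : CliffordAlgebra Qf) : F :=
  bas.coord ∅ (x * cconj Qf y)

/-- The Lie algebra `G = {ξ : c(ξ) = -ξ}` of infinitesimal isometries, as a submodule. -/
noncomputable def Gsub (Qf : QuadraticForm F V) : Submodule F (CliffordAlgebra Qf) :=
  LinearMap.ker (cconj Qf + LinearMap.id)

end Defs

/-! In the monomial basis `e_s` attached to an orthogonal basis of `V`, every product `e_s e_t`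
is a scalar multiple of `e_{s ∆ t}`, and `α`, `c` act diagonally on the `e_s`, fixing `e_∅ = 1`.
Hence the scalar part `p` is a trace, `p(xy) = p(yx)`, and `p ∘ α = p ∘ c = p`. All six identities
follow from these three facts together with `c` being an involutive anti-automorphism commuting
with `α`; on vectors, `p(v c(w)) = -p(v w)` is read off the orthogonal basis. -/

open scoped symmDiff

section Conjugation

variable {F V : Type*} [Field F] [AddCommGroup V] [Module F V] (Qf : QuadraticForm F V)

lemma cconj_apply (x : CliffordAlgebra Qf) : cconj Qf x = involute (reverse x) := rfl

lemma cconj_one : cconj Qf 1 = 1 := by simp [cconj_apply]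

lemma cconj_ι (v : V) : cconj Qf (ι Qf v) = -ι Qf v := by simp [cconj_apply]

lemma cconj_mul (x y : CliffordAlgebra Qf) :
    cconj Qf (x * y) = cconj Qf y * cconj Qf x := by
  simp [cconj_apply]

lemma cconj_cconj (x : CliffordAlgebra Qf) : cconj Qf (cconj Qf x) = x := by
  rw [cconj_apply, cconj_apply, reverse_involute, involute_involute, reverse_reverse]

lemma cconj_involute (x : CliffordAlgebra Qf) :
    cconj Qf (involute x) = involute (cconj Qf x) := by
  rw [cconj_apply, cconj_apply, reverse_involute]

end Conjugation

lemma Module.Basis.coord_map_eq_of_forall_smul_self {R M ι : Type*} [CommSemiring R]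
    [AddCommMonoid M] [Module R M] (bas : Module.Basis ι R M) (i : ι) (f : M →ₗ[R] M)
    (hf : ∀ j, ∃ c : R, f (bas j) = c • bas j) (hi : f (bas i) = bas i) (x : M) :
    bas.coord i (f x) = bas.coord i x := by
  suffices bas.coord i ∘ₗ f = bas.coord i from LinearMap.congr_fun this x
  refine bas.ext fun j => ?_
  rcases eq_or_ne j i with rfl | hji
  · simp [hi]
  · obtain ⟨c, hc⟩ := hf j
    simp [hc, hji.symm]

lemma Finset.insert_eq_symmDiff_singleton {α : Type*} [DecidableEq α] {a : α} {s : Finset α}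
    (h : a ∉ s) : insert a s = s ∆ {a} := by
  rw [symmDiff_eq_union (Finset.disjoint_singleton_right.2 h), Finset.union_singleton]

section Monomials

variable {F V : Type*} [Field F] [AddCommGroup V] [Module F V]
  (Qf : QuadraticForm F V) {n : ℕ} (b : Module.Basis (Fin n) F V)

lemma eI_empty : eI Qf b ∅ = 1 := by simp [eI]

lemma eI_singleton (i : Fin n) : eI Qf b {i} = ι Qf (b i) := by simp [eI]

lemma ι_mul_eI_of_forall_lt {a : Fin n} {s : Finset (Fin n)} (h : ∀ k ∈ s, a < k) :
    ι Qf (b a) * eI Qf b s = eI Qf b (insert a s) := by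
  rw [eI, eI, Finset.sort_insert _ (fun k hk => (h k hk).le) fun ha => (h a ha).false,
    List.map_cons, List.prod_cons]

lemma involute_eI (s : Finset (Fin n)) :
    involute (eI Qf b s) = (-1 : F) ^ s.card • eI Qf b s := by
  induction s using Finset.induction_on_min with
  | empty => simp [eI_empty]
  | insert a s h ih =>
    rw [← ι_mul_eI_of_forall_lt Qf b h, map_mul, involute_ι, ih,
      Finset.card_insert_of_notMem fun ha => (h a ha).false, pow_succ', mul_smul,
      neg_one_smul, neg_mul, mul_smul_comm]

variable {Qf b} (hb : Pairwise fun i j => Qf.IsOrtho (b i) (b j))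
include hb

lemma ι_mul_eI (s : Finset (Fin n)) (i : Fin n) :
    ∃ c : F, ι Qf (b i) * eI Qf b s = c • eI Qf b (s ∆ {i}) := by
  induction s using Finset.induction_on_min generalizing i with
  | empty =>
    refine ⟨1, ?_⟩
    rw [one_smul, ← Finset.bot_eq_empty, bot_symmDiff, Finset.bot_eq_empty,
      ι_mul_eI_of_forall_lt Qf b (by simp), insert_empty_eq]
  | insert a s h ih =>
    have ha : a ∉ s := fun ha => (h a ha).false
    rcases lt_trichotomy i a with hia | rfl | hai
    · have hlt : ∀ k ∈ insert a s, i < k :=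
        (Finset.forall_mem_insert ..).2 ⟨hia, fun k hk => hia.trans (h k hk)⟩
      refine ⟨1, ?_⟩
      rw [one_smul, ι_mul_eI_of_forall_lt Qf b hlt,
        Finset.insert_eq_symmDiff_singleton fun hi => (hlt i hi).false]
    · refine ⟨Qf (b i), ?_⟩
      rw [← ι_mul_eI_of_forall_lt Qf b h, ← mul_assoc, ι_sq_scalar, Algebra.smul_def,
        Finset.insert_eq_symmDiff_singleton ha, symmDiff_symmDiff_cancel_right]
    · obtain ⟨c, hc⟩ := ih i
      have hlt : ∀ k ∈ s ∆ {i}, a < k := by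
        intro k hk
        rcases Finset.mem_symmDiff.1 hk with ⟨hk, -⟩ | ⟨hk, -⟩
        · exact h k hk
        · exact (Finset.mem_singleton.1 hk) ▸ hai
      refine ⟨-c, ?_⟩
      rw [← ι_mul_eI_of_forall_lt Qf b h, ← mul_assoc, ι_mul_ι_comm_of_isOrtho (hb hai.ne'),
        neg_mul, mul_assoc, hc, mul_smul_comm, ι_mul_eI_of_forall_lt Qf b hlt, neg_smul,
        Finset.insert_eq_symmDiff_singleton fun ha' => (hlt a ha').false,
        Finset.insert_eq_symmDiff_singleton ha, symmDiff_right_comm]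

lemma eI_mul_eI (s t : Finset (Fin n)) :
    ∃ c : F, eI Qf b s * eI Qf b t = c • eI Qf b (s ∆ t) := by
  induction s using Finset.induction_on_min with
  | empty => exact ⟨1, by rw [eI_empty, one_mul, one_smul, ← Finset.bot_eq_empty, bot_symmDiff]⟩
  | insert a s h ih =>
    obtain ⟨c, hc⟩ := ih
    obtain ⟨c', hc'⟩ := ι_mul_eI hb (s ∆ t) a
    refine ⟨c * c', ?_⟩
    rw [← ι_mul_eI_of_forall_lt Qf b h, mul_assoc, hc, mul_smul_comm, hc', smul_smul,
      symmDiff_right_comm, Finset.insert_eq_symmDiff_singleton fun ha => (h a ha).false]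

lemma reverse_eI (s : Finset (Fin n)) : ∃ c : F, reverse (eI Qf b s) = c • eI Qf b s := by
  induction s using Finset.induction_on_min with
  | empty => exact ⟨1, by simp [eI_empty]⟩
  | insert a s h ih =>
    obtain ⟨c, hc⟩ := ih
    obtain ⟨c', hc'⟩ := eI_mul_eI hb s {a}
    refine ⟨c * c', ?_⟩
    conv_lhs => rw [← ι_mul_eI_of_forall_lt Qf b h]
    rw [reverse.map_mul, reverse_ι, hc, smul_mul_assoc, ← eI_singleton, hc', smul_smul,
      Finset.insert_eq_symmDiff_singleton (h a · |>.false)]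

lemma cconj_eI (s : Finset (Fin n)) : ∃ c : F, cconj Qf (eI Qf b s) = c • eI Qf b s := by
  obtain ⟨c, hc⟩ := reverse_eI hb s
  exact ⟨c * (-1) ^ s.card, by rw [cconj_apply, hc, map_smul, involute_eI, smul_smul]⟩

end Monomials

lemma pairwise_isOrtho_of_bilinForm {F V ι : Type*} [Field F] [AddCommGroup V] [Module F V]
    {Qf : QuadraticForm F V} {B : LinearMap.BilinForm F V} (hQ : ∀ v, Qf v = B v v)
    {b : ι → V} (hB : B.IsOrthoᵢ b) : Pairwise fun i j => Qf.IsOrtho (b i) (b j) := by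
  intro i j hij
  simp only [QuadraticMap.isOrtho_def, hQ, map_add, LinearMap.add_apply, hB hij, hB hij.symm]
  ring

section ScalarPart

variable {F V : Type*} [Field F] [AddCommGroup V] [Module F V]
  {Qf : QuadraticForm F V} {n : ℕ} {b : Module.Basis (Fin n) F V}
  {bas : Module.Basis (Finset (Fin n)) F (CliffordAlgebra Qf)}
  (hbas : ∀ s : Finset (Fin n), bas s = eI Qf b s)
include hbas

lemma coord_eI (s : Finset (Fin n)) :
    bas.coord ∅ (eI Qf b s) = if s = ∅ then 1 else 0 := by
  rw [← hbas s, Module.Basis.coord_apply, Module.Basis.repr_self, Finsupp.single_apply, eq_comm]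

lemma coord_one : bas.coord ∅ 1 = 1 := by
  rw [← eI_empty Qf b, coord_eI hbas, if_pos rfl]

lemma coord_involute (x : CliffordAlgebra Qf) : bas.coord ∅ (involute x) = bas.coord ∅ x :=
  bas.coord_map_eq_of_forall_smul_self ∅ involute.toLinearMap
    (fun s => ⟨_, by rw [hbas, AlgHom.toLinearMap_apply, involute_eI]⟩)
    (by rw [hbas, AlgHom.toLinearMap_apply, eI_empty, map_one]) x

lemma coord_ι_mul_ι {B : LinearMap.BilinForm F V} (hQ : ∀ v, Qf v = B v v) (hB : B.IsOrthoᵢ b)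
    (v w : V) : bas.coord ∅ (ι Qf v * ι Qf w) = B v w := by
  suffices ((LinearMap.mul F _).compr₂ (bas.coord ∅)).compl₁₂ (ι Qf) (ι Qf) = B from
    LinearMap.congr_fun₂ this v w
  refine LinearMap.ext_basis b b fun i j => ?_
  rcases eq_or_ne i j with rfl | hij
  · simp [ι_sq_scalar, Algebra.algebraMap_eq_smul_one, coord_one hbas, hQ]
  obtain ⟨c, hc⟩ := eI_mul_eI (pairwise_isOrtho_of_bilinForm hQ hB) {i} {j}
  simp only [eI_singleton] at hc
  simp [hc, coord_eI hbas, hij, hB hij]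

variable (hb : Pairwise fun i j => Qf.IsOrtho (b i) (b j))
include hb

lemma coord_cconj (x : CliffordAlgebra Qf) : bas.coord ∅ (cconj Qf x) = bas.coord ∅ x :=
  bas.coord_map_eq_of_forall_smul_self ∅ (cconj Qf) (fun s => by simpa [hbas] using cconj_eI hb s)
    (by rw [hbas, eI_empty, cconj_one]) x

lemma coord_mul_comm (x y : CliffordAlgebra Qf) :
    bas.coord ∅ (x * y) = bas.coord ∅ (y * x) := by
  suffices (LinearMap.mul F _).compr₂ (bas.coord ∅) =
      (LinearMap.mul F _).flip.compr₂ (bas.coord ∅) from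
    LinearMap.congr_fun₂ this x y
  refine LinearMap.ext_basis bas bas fun s t => ?_
  rcases eq_or_ne s t with rfl | hst
  · rfl
  obtain ⟨c, hc⟩ := eI_mul_eI hb s t
  obtain ⟨c', hc'⟩ := eI_mul_eI hb t s
  simp [hbas, hc, hc', coord_eI hbas, hst, hst.symm]

end ScalarPart

theorem stmt9_general {F V : Type*} [Field F] [AddCommGroup V] [Module F V]
    (B : LinearMap.BilinForm F V)
    (Qf : QuadraticForm F V) (hQ : ∀ v : V, Qf v = -(B v v))
    {n : ℕ} (b : Module.Basis (Fin n) F V)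
    (hortho : ∀ i j : Fin n, i ≠ j → B (b i) (b j) = 0)
    (bas : Module.Basis (Finset (Fin n)) F (CliffordAlgebra Qf))
    (hbas : ∀ s : Finset (Fin n), bas s = eI Qf b s) :
    Qbar bas 1 1 = 1 ∧
    (∀ x y z : CliffordAlgebra Qf, Qbar bas (x * y) z = Qbar bas y (cconj Qf x * z)) ∧
    (∀ x y z : CliffordAlgebra Qf, Qbar bas (y * x) z = Qbar bas y (z * cconj Qf x)) ∧
    (∀ v w : V, Qbar bas (ι Qf v) (ι Qf w) = B v w) ∧
    (∀ x y : CliffordAlgebra Qf, Qbar bas (involute x) (involute y) = Qbar bas x y) ∧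
    (∀ x y : CliffordAlgebra Qf, Qbar bas (cconj Qf x) (cconj Qf y) = Qbar bas x y) := by
  have hQ' : ∀ v, Qf v = (-B) v v := by simpa using hQ
  have hB' : (-B).IsOrthoᵢ b := fun i j hij => by simp [Function.onFun, hortho i j hij]
  have hb := pairwise_isOrtho_of_bilinForm hQ' hB'
  refine ⟨?_, fun x y z => ?_, fun x y z => ?_, fun v w => ?_, fun x y => ?_, fun x y => ?_⟩
  · rw [Qbar, cconj_one, one_mul, coord_one hbas]
  · rw [Qbar, Qbar, cconj_mul, cconj_cconj, mul_assoc, coord_mul_comm hbas hb, mul_assoc]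
  · rw [Qbar, Qbar, cconj_mul, cconj_cconj, mul_assoc]
  · rw [Qbar, cconj_ι, mul_neg, map_neg, coord_ι_mul_ι hbas hQ' hB', LinearMap.neg_apply,
      LinearMap.neg_apply, neg_neg]
  · rw [Qbar, Qbar, cconj_involute, ← map_mul, coord_involute hbas]
  · rw [Qbar, Qbar, cconj_cconj, ← coord_cconj hbas hb (cconj Qf x * y), cconj_mul, cconj_cconj,
      coord_mul_comm hbas hb]

theorem stmt9 {F V : Type*} [Field F] [AddCommGroup V] [Module F V]
    [FiniteDimensional F V] (h2 : (2 : F) ≠ 0)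
    (B : LinearMap.BilinForm F V)
    (hsymm : ∀ v w : V, B v w = B w v)
    (hnd : ∀ v : V, (∀ w : V, B v w = 0) → v = 0)
    (Qf : QuadraticForm F V) (hQ : ∀ v : V, Qf v = -(B v v))
    {n : ℕ} (b : Module.Basis (Fin n) F V)
    (hortho : ∀ i j : Fin n, i ≠ j → B (b i) (b j) = 0)
    (bas : Module.Basis (Finset (Fin n)) F (CliffordAlgebra Qf))
    (hbas : ∀ s : Finset (Fin n), bas s = eI Qf b s) :
    Qbar bas 1 1 = 1 ∧
    (∀ x y z : CliffordAlgebra Qf, Qbar bas (x * y) z = Qbar bas y (cconj Qf x * z)) ∧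
    (∀ x y z : CliffordAlgebra Qf, Qbar bas (y * x) z = Qbar bas y (z * cconj Qf x)) ∧
    (∀ v w : V, Qbar bas (ι Qf v) (ι Qf w) = B v w) ∧
    (∀ x y : CliffordAlgebra Qf, Qbar bas (involute x) (involute y) = Qbar bas x y) ∧
    (∀ x y : CliffordAlgebra Qf, Qbar bas (cconj Qf x) (cconj Qf y) = Qbar bas x y) :=
  stmt9_general B Qf hQ b hortho bas hbas
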